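/- Let A be a weak*-closed unital subalgebra of the multiplier algebra of an RKHS H on X, let g, h ∈ H be nonvanishing, let H_g = [A g], H_h = [A h], and let S : H_g → H_h be a bounded invertible operator with S M_f = M_f S for all f ∈ A. Then there exists a function φ : X → ℂ such that S* k_x^h = conj(φ(x)) k_x^g for all x ∈ X, where k_x^g, k_x^h are the kernel vectors of H_g, H_h. -/

import Mathlib

/-!
Fix `x`. Every `M ∈ A` satisfies `⟪k x, M u⟫ = f(x) ⟪k x, u⟫`, so on the generators `M g` of `H_g`
the functional `v ↦ ⟪k x, S v⟫` equals `f(x) ⟪k x, S g⟫`, which is `φ(x) ⟪k x, M g⟫` with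
`φ(x) = ⟪k x, S g⟫ / ⟪k x, g⟫`. Both sides are continuous in `v`, so this identity extends to
all of `H_g`, and reading it through the reproducing property of `k^g`, `k^h` gives
`S* k_x^h = conj(φ(x)) k_x^g`.
-/

open scoped ENNReal

local notation "⟪" x ", " y "⟫" => @inner ℂ _ _ x y

/-- The weak* topology on `B(H₁,H₂)` coming from its duality with trace class operators. -/
noncomputable def weakStar (H₁ H₂ : Type*) [NormedAddCommGroup H₁] [InnerProductSpace ℂ H₁]
    [CompleteSpace H₁] [NormedAddCommGroup H₂] [InnerProductSpace ℂ H₂] [CompleteSpace H₂] :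
    TopologicalSpace (H₁ →L[ℂ] H₂) :=
  TopologicalSpace.induced
    (fun A => fun p : (lp (fun _ : ℕ => H₁) 2) × (lp (fun _ : ℕ => H₂) 2) =>
      ∑' j, ⟪(p.2 : ∀ _ : ℕ, H₂) j, A ((p.1 : ∀ _ : ℕ, H₁) j)⟫)
    Pi.topologicalSpace

theorem Submodule.dense_span_preimage_val {𝕜 E : Type*} [Semiring 𝕜] [AddCommMonoid E] [Module 𝕜 E]
    [TopologicalSpace E] [ContinuousAdd E] [ContinuousConstSMul 𝕜 E]
    (K : Submodule 𝕜 E) (t : Set E) (hK : K = (span 𝕜 t).topologicalClosure) :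
    Dense (span 𝕜 (Subtype.val ⁻¹' t : Set K) : Set K) := by
  have htK : t ⊆ K := hK ▸ subset_span.trans (le_topologicalClosure _)
  have himage : Subtype.val '' (span 𝕜 (Subtype.val ⁻¹' t : Set K) : Set K) = span 𝕜 t := by
    rw [← K.coe_subtype, ← map_coe, map_span, K.coe_subtype, Set.image_preimage_eq_of_subset]
    simpa using htK
  rw [(Topology.IsEmbedding.subtypeVal (p := (· ∈ K))).isInducing.dense_iff, himage,
    ← topologicalClosure_coe, ← hK]
  exact fun v => v.2

theorem ContinuousLinearMap.adjoint_apply_eq_smul_iff {𝕜 E F : Type*} [RCLike 𝕜]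
    [NormedAddCommGroup E] [InnerProductSpace 𝕜 E] [CompleteSpace E]
    [NormedAddCommGroup F] [InnerProductSpace 𝕜 F] [CompleteSpace F]
    (T : E →L[𝕜] F) (x : E) (y : F) (c : 𝕜) :
    adjoint T y = (starRingEnd 𝕜) c • x ↔ ∀ v, inner 𝕜 y (T v) = c * inner 𝕜 x v := by
  rw [ext_iff_inner_right 𝕜]
  simp only [adjoint_inner_left, inner_smul_left, RCLike.conj_conj]

theorem stmt_17_general {X H : Type*} [NormedAddCommGroup H] [InnerProductSpace ℂ H] [CompleteSpace H]
    (k : X → H)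
    (A : Set (H →L[ℂ] H))
    (hA1 : ContinuousLinearMap.id ℂ H ∈ A)
    (hAm : ∀ M ∈ A, ∃ f : X → ℂ, ∀ x,
      ContinuousLinearMap.adjoint M (k x) = (starRingEnd ℂ) (f x) • k x)
    (g : H) (hg : ∀ x, ⟪k x, g⟫ ≠ 0)
    (Hg Hh : Submodule ℂ H) [CompleteSpace Hg] [CompleteSpace Hh]
    (hHg : Hg = (Submodule.span ℂ {w | ∃ M ∈ A, w = M g}).topologicalClosure)
    (hAg : ∀ M ∈ A, ∀ v ∈ Hg, M v ∈ Hg)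
    (S : Hg ≃L[ℂ] Hh)
    (hcomm : ∀ (M : H →L[ℂ] H) (hM : M ∈ A) (v : Hg),
      (S ⟨M ↑v, hAg M hM _ v.2⟩ : H) = M ↑(S v))
    (kg : X → Hg) (kh : X → Hh)
    (hkg : ∀ x, ∀ v : Hg, ⟪(kg x : H), (v : H)⟫ = ⟪k x, (v : H)⟫)
    (hkh : ∀ x, ∀ v : Hh, ⟪(kh x : H), (v : H)⟫ = ⟪k x, (v : H)⟫) :
    ∃ φ : X → ℂ, ∀ x,
      ContinuousLinearMap.adjoint (S : Hg →L[ℂ] Hh) (kh x)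
        = (starRingEnd ℂ) (φ x) • kg x := by
  have hgHg : g ∈ Hg :=
    hHg ▸ Submodule.le_topologicalClosure _ (Submodule.subset_span ⟨_, hA1, rfl⟩)
  set g' : Hg := ⟨g, hgHg⟩
  refine ⟨fun x => ⟪k x, (S g' : H)⟫ / ⟪k x, g⟫, fun x => ?_⟩
  have hfun : (innerSL ℂ (k x)).comp (Hh.subtypeL.comp (S : Hg →L[ℂ] Hh)) =
      (⟪k x, (S g' : H)⟫ / ⟪k x, g⟫) • (innerSL ℂ (k x)).comp Hg.subtypeL := by
    refine ContinuousLinearMap.ext_on (Hg.dense_span_preimage_val _ hHg) ?_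
    rintro v ⟨M, hM, hv⟩
    obtain ⟨f, hf⟩ := hAm M hM
    have hMk : ∀ u, ⟪k x, M u⟫ = f x * ⟪k x, u⟫ :=
      (M.adjoint_apply_eq_smul_iff (k x) (k x) (f x)).1 (hf x)
    obtain rfl : v = ⟨M g, hAg M hM g hgHg⟩ := Subtype.ext hv
    have hSv : (S ⟨M g, _⟩ : H) = M (S g') := hcomm M hM g'
    simp only [ContinuousLinearMap.comp_apply, smul_apply, innerSL_apply_apply,
      Submodule.subtypeL_apply, ContinuousLinearEquiv.coe_coe, hSv, hMk, smul_eq_mul]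
    field_simp [hg x]
  rw [ContinuousLinearMap.adjoint_apply_eq_smul_iff]
  intro v
  rw [Submodule.coe_inner, hkh, Submodule.coe_inner, hkg]
  exact DFunLike.congr_fun hfun v

/-- Let `A` be a weak*-closed unital subalgebra of the multiplier algebra of an RKHS `H` on
`X` (with kernel vectors `k x`), let `g, h ∈ H` be nonvanishing, `H_g = [A g]`,
`H_h = [A h]`, and let `S : H_g → H_h` be a bounded invertible operator intertwining the
action of `A`.  Then there is `φ : X → ℂ` with `S* k_x^h = conj (φ x) • k_x^g` for all `x`,
where `k_x^g, k_x^h` are the kernel vectors of `H_g, H_h`. -/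
theorem stmt_17 {X H : Type*} [NormedAddCommGroup H] [InnerProductSpace ℂ H] [CompleteSpace H]
    (k : X → H)
    (htot : (Submodule.span ℂ (Set.range k)).topologicalClosure = ⊤)
    (A : Set (H →L[ℂ] H))
    (hA1 : ContinuousLinearMap.id ℂ H ∈ A)
    (hAadd : ∀ M ∈ A, ∀ N ∈ A, M + N ∈ A)
    (hAsmul : ∀ (c : ℂ), ∀ M ∈ A, c • M ∈ A)
    (hAcomp : ∀ M ∈ A, ∀ N ∈ A, M.comp N ∈ A)
    (hAclosed : @IsClosed _ (weakStar H H) A)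
    (hAm : ∀ M ∈ A, ∃ f : X → ℂ, ∀ x,
      ContinuousLinearMap.adjoint M (k x) = (starRingEnd ℂ) (f x) • k x)
    (g h : H) (hg : ∀ x, ⟪k x, g⟫ ≠ 0) (hh : ∀ x, ⟪k x, h⟫ ≠ 0)
    (Hg Hh : Submodule ℂ H) [CompleteSpace Hg] [CompleteSpace Hh]
    (hHg : Hg = (Submodule.span ℂ {w | ∃ M ∈ A, w = M g}).topologicalClosure)
    (hHh : Hh = (Submodule.span ℂ {w | ∃ M ∈ A, w = M h}).topologicalClosure)
    (hAg : ∀ M ∈ A, ∀ v ∈ Hg, M v ∈ Hg)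
    (hAh : ∀ M ∈ A, ∀ v ∈ Hh, M v ∈ Hh)
    (S : Hg ≃L[ℂ] Hh)
    (hcomm : ∀ (M : H →L[ℂ] H) (hM : M ∈ A) (v : Hg),
      (S ⟨M ↑v, hAg M hM _ v.2⟩ : H) = M ↑(S v))
    (kg : X → Hg) (kh : X → Hh)
    (hkg : ∀ x, ∀ v : Hg, ⟪(kg x : H), (v : H)⟫ = ⟪k x, (v : H)⟫)
    (hkh : ∀ x, ∀ v : Hh, ⟪(kh x : H), (v : H)⟫ = ⟪k x, (v : H)⟫) :
    ∃ φ : X → ℂ, ∀ x,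
      ContinuousLinearMap.adjoint (S : Hg →L[ℂ] Hh) (kh x)
        = (starRingEnd ℂ) (φ x) • kg x :=
  stmt_17_general k A hA1 hAm g hg Hg Hh hHg hAg S hcomm kg kh hkg hkh
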